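/- Let a < b, let G₁, G₂, G₃ : ℝ³ → ℝ be continuous on [a,b]³, and let v : ℝ → ℝ be continuous on [a,b]. Define (𝒢[v⊗v])(s) = ∫_a^s ∫_a^θ G₁(s,θ,η)v(θ)v(η) dη dθ + ∫_s^b ∫_a^s G₂(s,θ,η)v(θ)v(η) dη dθ + ∫_s^b ∫_s^θ G₃(s,θ,η)v(θ)v(η) dη dθ, and define K(s,θ,η) = G₁(s,θ,η) + G₂(θ,s,η) + G₃(η,s,θ). Then ∫_a^b v(s)·(𝒢[v⊗v])(s) ds = ∫_a^b ∫_a^s ∫_a^θ K(s,θ,η) v(s)v(θ)v(η) dη dθ ds. -/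

import Mathlib

/-!
After multiplication by `v s`, the three regions of `tensorPI` are the parts of `[a, b]³` where
`s` is respectively the largest, the middle and the smallest of `s, θ, η`. Fubini on
the triangle `a ≤ s ≤ θ ≤ b` relabels the last two as the simplex `a ≤ η ≤ θ ≤ s ≤ b`, which
permutes the arguments of `G₂` and `G₃`. Only values on `[a, b]` enter the integrals, so composing
with the projection onto `[a, b]` reduces continuity on the cube to continuity everywhere.
-/

open MeasureTheory

/-- Tensor-product partial integral operator with kernels `G₁, G₂, G₃` on `[a,b]`,
applied to a two-variable function `w`, evaluated at `s`. -/
noncomputable def tensorPI (a b : ℝ) (G₁ G₂ G₃ : ℝ → ℝ → ℝ → ℝ)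
    (w : ℝ → ℝ → ℝ) (s : ℝ) : ℝ :=
  (∫ θ in a..s, ∫ η in a..θ, G₁ s θ η * w θ η)
    + (∫ θ in s..b, ∫ η in a..s, G₂ s θ η * w θ η)
    + (∫ θ in s..b, ∫ η in s..θ, G₃ s θ η * w θ η)


open Set Function

@[fun_prop]
theorem continuous_intervalIntegral_of_continuous_uncurry {X E : Type*} [TopologicalSpace X]
    [NormedAddCommGroup E] [NormedSpace ℝ E] {μ : Measure ℝ} [IsLocallyFiniteMeasure μ]
    [NullSingletonClass μ] {f : X → ℝ → E} (hf : Continuous (uncurry f)) {l u : X → ℝ}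
    (hl : Continuous l) (hu : Continuous u) : Continuous fun x => ∫ t in l x..u x, f x t ∂μ := by
  have hi (x : X) (c d : ℝ) : IntervalIntegrable (f x) μ c d :=
    (hf.uncurry_left x).intervalIntegrable c d
  have hsub (x : X) : ∫ t in l x..u x, f x t ∂μ
      = (∫ t in 0..u x, f x t ∂μ) - ∫ t in 0..l x, f x t ∂μ :=
    (intervalIntegral.integral_interval_sub_left (hi x 0 _) (hi x 0 _)).symm
  simp only [hsub]
  exact (intervalIntegral.continuous_parametric_intervalIntegral_of_continuous hf hu).sub
    (intervalIntegral.continuous_parametric_intervalIntegral_of_continuous hf hl)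

/-- Both sides are the integral of `g` over the triangle `a ≤ s ≤ θ ≤ b`. -/
theorem integral_integral_swap_triangle {a b : ℝ} (hab : a ≤ b) {g : ℝ → ℝ → ℝ}
    (hg : IntegrableOn (uncurry g) (Icc a b ×ˢ Icc a b)) :
    (∫ s in a..b, ∫ θ in s..b, g s θ) = ∫ θ in a..b, ∫ s in a..θ, g s θ := by
  set F : ℝ × ℝ → ℝ := {p : ℝ × ℝ | p.1 < p.2}.indicator (uncurry g)
  have hF : Integrable (uncurry fun s θ => F (s, θ))
      ((volume.restrict (Ioc a b)).prod (volume.restrict (Ioc a b))) := by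
    rw [Measure.prod_restrict, ← Measure.volume_eq_prod]
    exact (hg.mono_set (prod_mono Ioc_subset_Icc_self Ioc_subset_Icc_self)).integrable.indicator
      (measurableSet_lt measurable_fst measurable_snd)
  calc (∫ s in a..b, ∫ θ in s..b, g s θ)
      = ∫ s in Ioc a b, ∫ θ in Ioc a b, F (s, θ) := by
        rw [intervalIntegral.integral_of_le hab]
        refine setIntegral_congr_fun measurableSet_Ioc fun s hs => ?_
        have hslice : (fun θ => F (s, θ)) = (Ioi s).indicator (g s) := by
          ext θ; simp [F, indicator_apply]
        rw [hslice, setIntegral_indicator measurableSet_Ioi, Ioc_inter_Ioi, max_eq_right hs.1.le,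
          intervalIntegral.integral_of_le hs.2]
    _ = ∫ θ in Ioc a b, ∫ s in Ioc a b, F (s, θ) := integral_integral_swap hF
    _ = ∫ θ in a..b, ∫ s in a..θ, g s θ := by
        rw [intervalIntegral.integral_of_le hab]
        refine setIntegral_congr_fun measurableSet_Ioc fun θ hθ => ?_
        have hslice : (fun s => F (s, θ)) = (Iio θ).indicator (g · θ) := by
          ext s; simp [F, indicator_apply]
        have hinter : Ioc a b ∩ Iio θ = Ioo a θ := by
          ext s
          simp only [mem_inter_iff, mem_Ioc, mem_Iio, mem_Ioo]
          exact ⟨fun h => ⟨h.1.1, h.2⟩, fun h => ⟨⟨h.1, h.2.le.trans hθ.2⟩, h.2⟩⟩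
        rw [hslice, setIntegral_indicator measurableSet_Iio, hinter,
          intervalIntegral.integral_of_le hθ.1.le, integral_Ioc_eq_integral_Ioo]

theorem intervalIntegral_congr_of_eqOn_Icc {E : Type*} [NormedAddCommGroup E]
    [NormedSpace ℝ E] {μ : Measure ℝ} {a b c d : ℝ} {f g : ℝ → E} (hc : c ∈ Icc a b)
    (hd : d ∈ Icc a b) (h : EqOn f g (Icc a b)) : ∫ x in c..d, f x ∂μ = ∫ x in c..d, g x ∂μ :=
  intervalIntegral.integral_congr (h.mono (uIcc_subset_Icc hc hd))

noncomputable def simplexIntegral (a b : ℝ) (f : ℝ × ℝ × ℝ → ℝ) : ℝ :=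
  ∫ s in a..b, ∫ θ in a..s, ∫ η in a..θ, f (s, θ, η)

section simplexIntegral

variable {a b : ℝ} {f g : ℝ × ℝ × ℝ → ℝ}

theorem simplexIntegral_add (hf : Continuous f) (hg : Continuous g) :
    simplexIntegral a b (fun p => f p + g p) = simplexIntegral a b f + simplexIntegral a b g := by
  unfold simplexIntegral
  rw [← intervalIntegral.integral_add (Continuous.intervalIntegrable (by fun_prop) _ _)
    (Continuous.intervalIntegrable (by fun_prop) _ _)]
  congr 1; ext s
  rw [← intervalIntegral.integral_add (Continuous.intervalIntegrable (by fun_prop) _ _)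
    (Continuous.intervalIntegrable (by fun_prop) _ _)]
  congr 1; ext θ
  exact intervalIntegral.integral_add (Continuous.intervalIntegrable (by fun_prop) _ _)
    (Continuous.intervalIntegrable (by fun_prop) _ _)

/-- The region `a ≤ η ≤ s ≤ θ ≤ b`, on which `s` is the middle variable. -/
theorem integral_mid_region_eq_simplexIntegral (hab : a ≤ b) (hf : Continuous f) :
    (∫ s in a..b, ∫ θ in s..b, ∫ η in a..s, f (s, θ, η))
      = simplexIntegral a b fun p => f (p.2.1, p.1, p.2.2) :=
  integral_integral_swap_triangle hab <|
    (show Continuous (uncurry fun s θ => ∫ η in a..s, f (s, θ, η)) by fun_prop).continuousOn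
      |>.integrableOn_compact (isCompact_Icc.prod isCompact_Icc)

/-- The region `a ≤ s ≤ η ≤ θ ≤ b`, on which `s` is the smallest variable. -/
theorem integral_min_region_eq_simplexIntegral (hab : a ≤ b) (hf : Continuous f) :
    (∫ s in a..b, ∫ θ in s..b, ∫ η in s..θ, f (s, θ, η))
      = simplexIntegral a b fun p => f (p.2.2, p.1, p.2.1) := by
  rw [integral_integral_swap_triangle hab <|
    (show Continuous (uncurry fun s θ => ∫ η in s..θ, f (s, θ, η)) by fun_prop).continuousOn
      |>.integrableOn_compact (isCompact_Icc.prod isCompact_Icc)]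
  refine intervalIntegral.integral_congr fun θ hθ => ?_
  rw [uIcc_of_le hab] at hθ
  exact integral_integral_swap_triangle hθ.1 <|
    (show Continuous (uncurry fun s η => f (s, θ, η)) by fun_prop).continuousOn
      |>.integrableOn_compact (isCompact_Icc.prod isCompact_Icc)

theorem simplexIntegral_comp_of_eqOn_Icc (hab : a ≤ b) {π : ℝ → ℝ}
    (hπ : ∀ x ∈ Icc a b, π x = x) :
    simplexIntegral a b (fun p => f (π p.1, π p.2.1, π p.2.2)) = simplexIntegral a b f := by
  have ha : a ∈ Icc a b := left_mem_Icc.2 hab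
  have hb : b ∈ Icc a b := right_mem_Icc.2 hab
  refine intervalIntegral_congr_of_eqOn_Icc ha hb fun s hs =>
    intervalIntegral_congr_of_eqOn_Icc ha hs fun θ hθ =>
      intervalIntegral_congr_of_eqOn_Icc ha hθ fun η hη => ?_
  simp only [hπ s hs, hπ θ hθ, hπ η hη]

end simplexIntegral

theorem tensorPI_comp_of_eqOn_Icc {a b s : ℝ} (hab : a ≤ b) {π : ℝ → ℝ}
    (hπ : ∀ x ∈ Icc a b, π x = x) (G₁ G₂ G₃ : ℝ → ℝ → ℝ → ℝ) (w : ℝ → ℝ → ℝ)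
    (hs : s ∈ Icc a b) :
    tensorPI a b (fun s θ η => G₁ (π s) (π θ) (π η)) (fun s θ η => G₂ (π s) (π θ) (π η))
        (fun s θ η => G₃ (π s) (π θ) (π η)) (fun θ η => w (π θ) (π η)) s
      = tensorPI a b G₁ G₂ G₃ w s := by
  have ha : a ∈ Icc a b := left_mem_Icc.2 hab
  have hb : b ∈ Icc a b := right_mem_Icc.2 hab
  simp only [tensorPI, hπ s hs]
  congr 1; congr 1
  · exact intervalIntegral_congr_of_eqOn_Icc ha hs fun θ hθ =>
      intervalIntegral_congr_of_eqOn_Icc ha hθ fun η hη => by simp only [hπ θ hθ, hπ η hη]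
  · exact intervalIntegral_congr_of_eqOn_Icc hs hb fun θ hθ =>
      intervalIntegral_congr_of_eqOn_Icc ha hs fun η hη => by simp only [hπ θ hθ, hπ η hη]
  · exact intervalIntegral_congr_of_eqOn_Icc hs hb fun θ hθ =>
      intervalIntegral_congr_of_eqOn_Icc hs hθ fun η hη => by simp only [hπ θ hθ, hπ η hη]

theorem integral_three_regions_eq_simplexIntegral {a b : ℝ} (hab : a ≤ b)
    {f₁ f₂ f₃ : ℝ × ℝ × ℝ → ℝ} (hf₁ : Continuous f₁) (hf₂ : Continuous f₂)
    (hf₃ : Continuous f₃) :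
    (∫ s in a..b, (∫ θ in a..s, ∫ η in a..θ, f₁ (s, θ, η))
        + (∫ θ in s..b, ∫ η in a..s, f₂ (s, θ, η)) + (∫ θ in s..b, ∫ η in s..θ, f₃ (s, θ, η)))
      = simplexIntegral a b fun p => f₁ p + f₂ (p.2.1, p.1, p.2.2) + f₃ (p.2.2, p.1, p.2.1) := by
  rw [intervalIntegral.integral_add (Continuous.intervalIntegrable (by fun_prop) _ _)
      (Continuous.intervalIntegrable (by fun_prop) _ _),
    intervalIntegral.integral_add (Continuous.intervalIntegrable (by fun_prop) _ _)
      (Continuous.intervalIntegrable (by fun_prop) _ _),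
    integral_mid_region_eq_simplexIntegral hab hf₂, integral_min_region_eq_simplexIntegral hab hf₃,
    simplexIntegral_add (by fun_prop) (by fun_prop), simplexIntegral_add hf₁ (by fun_prop)]
  rfl

theorem integral_mul_tensorPI_eq_simplexIntegral {a b : ℝ} (hab : a ≤ b)
    {G₁ G₂ G₃ : ℝ → ℝ → ℝ → ℝ} (hG₁ : Continuous fun p : ℝ × ℝ × ℝ => G₁ p.1 p.2.1 p.2.2)
    (hG₂ : Continuous fun p : ℝ × ℝ × ℝ => G₂ p.1 p.2.1 p.2.2)
    (hG₃ : Continuous fun p : ℝ × ℝ × ℝ => G₃ p.1 p.2.1 p.2.2) {v : ℝ → ℝ} (hv : Continuous v) :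
    (∫ s in a..b, v s * tensorPI a b G₁ G₂ G₃ (fun θ η => v θ * v η) s)
      = simplexIntegral a b fun p => (G₁ p.1 p.2.1 p.2.2 + G₂ p.2.1 p.1 p.2.2 + G₃ p.2.2 p.1 p.2.1)
          * (v p.1 * v p.2.1 * v p.2.2) := by
  simp only [tensorPI, mul_add, ← intervalIntegral.integral_const_mul]
  refine (integral_three_regions_eq_simplexIntegral hab
    (f₁ := fun p => v p.1 * (G₁ p.1 p.2.1 p.2.2 * (v p.2.1 * v p.2.2)))
    (f₂ := fun p => v p.1 * (G₂ p.1 p.2.1 p.2.2 * (v p.2.1 * v p.2.2)))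
    (f₃ := fun p => v p.1 * (G₃ p.1 p.2.1 p.2.2 * (v p.2.1 * v p.2.2)))
    (by fun_prop) (by fun_prop) (by fun_prop)).trans ?_
  congr 1; ext p; ring

theorem quadratic_to_linear_representation (a b : ℝ) (hab : a < b)
    (G₁ G₂ G₃ : ℝ → ℝ → ℝ → ℝ)
    (hG₁ : ContinuousOn (fun p : ℝ × ℝ × ℝ => G₁ p.1 p.2.1 p.2.2)
      (Set.Icc a b ×ˢ Set.Icc a b ×ˢ Set.Icc a b))
    (hG₂ : ContinuousOn (fun p : ℝ × ℝ × ℝ => G₂ p.1 p.2.1 p.2.2)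
      (Set.Icc a b ×ˢ Set.Icc a b ×ˢ Set.Icc a b))
    (hG₃ : ContinuousOn (fun p : ℝ × ℝ × ℝ => G₃ p.1 p.2.1 p.2.2)
      (Set.Icc a b ×ˢ Set.Icc a b ×ˢ Set.Icc a b))
    (v : ℝ → ℝ) (hv : ContinuousOn v (Set.Icc a b)) :
    (∫ s in a..b, v s * tensorPI a b G₁ G₂ G₃ (fun θ η => v θ * v η) s)
    = ∫ s in a..b, ∫ θ in a..s, ∫ η in a..θ,
        (G₁ s θ η + G₂ θ s η + G₃ η s θ) * (v s * v θ * v η) := by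
  set π : ℝ → ℝ := fun x => (projIcc a b hab.le x : ℝ)
  have hπ : ∀ x ∈ Icc a b, π x = x := fun x hx => congrArg Subtype.val (projIcc_of_mem hab.le hx)
  have hπ_mem (x : ℝ) : π x ∈ Icc a b := (projIcc a b hab.le x).2
  have hπ_cont : Continuous π := continuous_projIcc.subtype_val
  have extend {G : ℝ → ℝ → ℝ → ℝ}
      (hG : ContinuousOn (fun p : ℝ × ℝ × ℝ => G p.1 p.2.1 p.2.2) (Icc a b ×ˢ Icc a b ×ˢ Icc a b)) :
      Continuous fun p : ℝ × ℝ × ℝ => G (π p.1) (π p.2.1) (π p.2.2) :=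
    hG.comp_continuous (f := fun p : ℝ × ℝ × ℝ => (π p.1, π p.2.1, π p.2.2)) (by fun_prop)
      fun p => ⟨hπ_mem _, hπ_mem _, hπ_mem _⟩
  have key := integral_mul_tensorPI_eq_simplexIntegral hab.le
    (G₁ := fun s θ η => G₁ (π s) (π θ) (π η)) (G₂ := fun s θ η => G₂ (π s) (π θ) (π η))
    (G₃ := fun s θ η => G₃ (π s) (π θ) (π η)) (extend hG₁) (extend hG₂) (extend hG₃)
    (hv.comp_continuous hπ_cont hπ_mem)
  refine Eq.trans ?_ (key.trans (simplexIntegral_comp_of_eqOn_Icc hab.le hπ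
    (f := fun p => (G₁ p.1 p.2.1 p.2.2 + G₂ p.2.1 p.1 p.2.2 + G₃ p.2.2 p.1 p.2.1)
      * (v p.1 * v p.2.1 * v p.2.2))))
  refine intervalIntegral_congr_of_eqOn_Icc (left_mem_Icc.2 hab.le) (right_mem_Icc.2 hab.le)
    fun s hs => ?_
  rw [comp_apply, hπ s hs]
  exact congrArg (v s * ·)
    (tensorPI_comp_of_eqOn_Icc hab.le hπ G₁ G₂ G₃ (fun θ η => v θ * v η) hs).symm
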